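/- (Lemma 1) The normalized thermodynamic integral up to any point t ∈ (0,1), NTI(t) = ∫₀^t ∫_Θ p_s(θ) log(p₁(θ)/p₀(θ)) dν(θ) ds, equals log μ(t), and hence equals minus the Chernoff t-divergence of the endpoint densities: NTI(t) = log μ(t) = −C_t(p₁ ‖ p₀). -/

import Mathlib

open MeasureTheory Real Set Filter Topology

/-!
Differentiating `μ(s) = ∫ p₁^s p₀^(1-s) dν` under the integral sign gives
`μ'(s) = ∫ p₁^s p₀^(1-s) log (p₁/p₀) dν`, so the inner integral of the thermodynamic
integral is `μ'(s)/μ(s) = (log μ)'(s)`, and the fundamental theorem of calculus together with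
`μ(0) = 1` yields `log μ(t)`. Differentiation under the integral is justified on `(a, b)` by the
bound `c^u ≤ c^a + c^b` for `a ≤ u ≤ b`, which dominates the `s`-derivative by
`(p₁^a p₀^(1-a) + p₁^b p₀^(1-b)) |log (p₁/p₀)|`; the endpoints `a, b` are chosen among
the almost all `s` for which the integrability hypothesis on `[0,1] × Θ` makes this
integrable.
-/

lemma rpow_le_rpow_add_rpow {c a b u : ℝ} (hc : 0 < c) (hau : a ≤ u) (hub : u ≤ b) :
    c ^ u ≤ c ^ a + c ^ b := by
  rcases le_total 1 c with h | h
  · linarith [rpow_le_rpow_of_exponent_le h hub, rpow_pos_of_pos hc a]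
  · linarith [rpow_le_rpow_of_exponent_ge hc h hau, rpow_pos_of_pos hc b]

lemma rpow_mul_rpow_one_sub_eq {x y : ℝ} (hx : 0 < x) (hy : 0 < y) (s : ℝ) :
    y ^ s * x ^ (1 - s) = x * (y / x) ^ s := by
  have : x ^ s ≠ 0 := (rpow_pos_of_pos hx s).ne'
  rw [div_rpow hy.le hx.le, rpow_sub hx, rpow_one]
  field_simp

lemma rpow_mul_rpow_one_sub_le {x y a b u : ℝ} (hx : 0 < x) (hy : 0 < y)
    (hau : a ≤ u) (hub : u ≤ b) :
    y ^ u * x ^ (1 - u) ≤ y ^ a * x ^ (1 - a) + y ^ b * x ^ (1 - b) := by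
  simp only [rpow_mul_rpow_one_sub_eq hx hy, ← mul_add]
  exact mul_le_mul_of_nonneg_left (rpow_le_rpow_add_rpow (div_pos hy hx) hau hub) hx.le

lemma hasDerivAt_rpow_mul_rpow_one_sub {x y : ℝ} (hx : 0 < x) (hy : 0 < y) (s : ℝ) :
    HasDerivAt (fun u => y ^ u * x ^ (1 - u)) (y ^ s * x ^ (1 - s) * log (y / x)) s := by
  have hy' := (hasDerivAt_const s y).rpow (hasDerivAt_id s) hy
  have hx' := (hasDerivAt_const s x).rpow ((hasDerivAt_id s).const_sub 1) hx
  refine (hy'.mul hx').congr_deriv ?_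
  rw [log_div hy.ne' hx.ne']
  simp only [id_eq]
  ring

lemma exists_mem_Ioo_of_ae_restrict {S : Set ℝ} {P : ℝ → Prop}
    (h : ∀ᵐ s ∂volume.restrict S, P s) {u v : ℝ} (huv : u < v) (hsub : Ioo u v ⊆ S) :
    ∃ s ∈ Ioo u v, P s := by
  have : (ae (volume.restrict (Ioo u v))).NeBot := ae_neBot.2 (by simp [huv])
  exact ((ae_restrict_of_ae_restrict_of_subset hsub h).and
    (ae_restrict_mem measurableSet_Ioo)).exists.imp fun s hs => ⟨hs.2, hs.1⟩

section GeometricPath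

variable {Θ : Type*} [MeasurableSpace Θ] {ν : Measure Θ} {p0 p1 : Θ → ℝ}

theorem continuousOn_integral_geomPath {a b : ℝ} (hpos : ∀ᵐ θ ∂ν, 0 < p0 θ ∧ 0 < p1 θ)
    (hint : ∀ u ∈ Icc a b, Integrable (fun θ => p1 θ ^ u * p0 θ ^ (1 - u)) ν) :
    ContinuousOn (fun s => ∫ θ, p1 θ ^ s * p0 θ ^ (1 - s) ∂ν) (Icc a b) := by
  intro s hs
  have hab : a ≤ b := hs.1.trans hs.2
  refine continuousWithinAt_of_dominated
    (eventually_mem_nhdsWithin.mono fun u hu => (hint u hu).aestronglyMeasurable)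
    (eventually_mem_nhdsWithin.mono fun u hu => ?_)
    ((hint a ⟨le_rfl, hab⟩).add (hint b ⟨hab, le_rfl⟩)) ?_
  · filter_upwards [hpos] with θ hθ
    rw [norm_of_nonneg (mul_pos (rpow_pos_of_pos hθ.2 _) (rpow_pos_of_pos hθ.1 _)).le]
    exact rpow_mul_rpow_one_sub_le hθ.1 hθ.2 hu.1 hu.2
  · filter_upwards [hpos] with θ hθ
    exact (hasDerivAt_rpow_mul_rpow_one_sub hθ.1 hθ.2 s).continuousAt.continuousWithinAt

theorem hasDerivAt_integral_geomPath {a b s : ℝ} (hs : s ∈ Ioo a b)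
    (hpos : ∀ᵐ θ ∂ν, 0 < p0 θ ∧ 0 < p1 θ)
    (hlog : AEStronglyMeasurable (fun θ => log (p1 θ / p0 θ)) ν)
    (hint : ∀ u ∈ Ioo a b, Integrable (fun θ => p1 θ ^ u * p0 θ ^ (1 - u)) ν)
    (ha : Integrable (fun θ => p1 θ ^ a * p0 θ ^ (1 - a) * |log (p1 θ / p0 θ)|) ν)
    (hb : Integrable (fun θ => p1 θ ^ b * p0 θ ^ (1 - b) * |log (p1 θ / p0 θ)|) ν) :
    HasDerivAt (fun u => ∫ θ, p1 θ ^ u * p0 θ ^ (1 - u) ∂ν)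
      (∫ θ, p1 θ ^ s * p0 θ ^ (1 - s) * log (p1 θ / p0 θ) ∂ν) s := by
  have hnhds : Ioo a b ∈ 𝓝 s := Ioo_mem_nhds hs.1 hs.2
  refine (hasDerivAt_integral_of_dominated_loc_of_deriv_le hnhds
    (F' := fun u θ => p1 θ ^ u * p0 θ ^ (1 - u) * log (p1 θ / p0 θ))
    (eventually_of_mem hnhds fun u hu => (hint u hu).aestronglyMeasurable) (hint s hs)
    ((hint s hs).aestronglyMeasurable.mul hlog) ?_ (ha.add hb) ?_).2
  · filter_upwards [hpos] with θ hθ u hu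
    rw [norm_mul, norm_of_nonneg (mul_pos (rpow_pos_of_pos hθ.2 _) (rpow_pos_of_pos hθ.1 _)).le,
      norm_eq_abs, Pi.add_apply, ← add_mul]
    exact mul_le_mul_of_nonneg_right
      (rpow_mul_rpow_one_sub_le hθ.1 hθ.2 hu.1.le hu.2.le) (abs_nonneg _)
  · filter_upwards [hpos] with θ hθ u _
    exact hasDerivAt_rpow_mul_rpow_one_sub hθ.1 hθ.2 u

theorem hasDerivAt_integral_geomPath_of_ae {c d s : ℝ} (hs : s ∈ Ioo c d)
    (hpos : ∀ᵐ θ ∂ν, 0 < p0 θ ∧ 0 < p1 θ)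
    (hlog : AEStronglyMeasurable (fun θ => log (p1 θ / p0 θ)) ν)
    (hint : ∀ u ∈ Ioo c d, Integrable (fun θ => p1 θ ^ u * p0 θ ^ (1 - u)) ν)
    (hslice : ∀ᵐ u ∂volume.restrict (Ioo c d),
      Integrable (fun θ => p1 θ ^ u * p0 θ ^ (1 - u) * |log (p1 θ / p0 θ)|) ν) :
    HasDerivAt (fun u => ∫ θ, p1 θ ^ u * p0 θ ^ (1 - u) ∂ν)
      (∫ θ, p1 θ ^ s * p0 θ ^ (1 - s) * log (p1 θ / p0 θ) ∂ν) s := by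
  obtain ⟨a, ha, ha_int⟩ :=
    exists_mem_Ioo_of_ae_restrict hslice hs.1 (Ioo_subset_Ioo_right hs.2.le)
  obtain ⟨b, hb, hb_int⟩ :=
    exists_mem_Ioo_of_ae_restrict hslice hs.2 (Ioo_subset_Ioo_left hs.1.le)
  exact hasDerivAt_integral_geomPath ⟨ha.2, hb.1⟩ hpos hlog
    (fun u hu => hint u ⟨ha.1.trans hu.1, hu.2.trans hb.2⟩) ha_int hb_int

theorem hasDerivAt_log_integral_geomPath {Z : ℝ → ℝ}
    (hZ : Z = fun u => ∫ θ, p1 θ ^ u * p0 θ ^ (1 - u) ∂ν) {c d s : ℝ} (hs : s ∈ Ioo c d)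
    (hZs : Z s ≠ 0) (hpos : ∀ᵐ θ ∂ν, 0 < p0 θ ∧ 0 < p1 θ)
    (hlog : AEStronglyMeasurable (fun θ => log (p1 θ / p0 θ)) ν)
    (hint : ∀ u ∈ Ioo c d, Integrable (fun θ => p1 θ ^ u * p0 θ ^ (1 - u)) ν)
    (hslice : ∀ᵐ u ∂volume.restrict (Ioo c d),
      Integrable (fun θ => p1 θ ^ u * p0 θ ^ (1 - u) * |log (p1 θ / p0 θ)|) ν) :
    HasDerivAt (fun u => log (Z u))
      (∫ θ, p1 θ ^ s * p0 θ ^ (1 - s) / Z s * log (p1 θ / p0 θ) ∂ν) s := by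
  have hZ' := hasDerivAt_integral_geomPath_of_ae hs hpos hlog hint hslice
  rw [← hZ] at hZ'
  convert hZ'.log hZs using 1
  rw [← integral_div]
  simp only [div_mul_eq_mul_div]

theorem integrable_geomPath_div_mul_log {S : Set ℝ} {Z : ℝ → ℝ}
    (hp0 : AEMeasurable p0 ν) (hp1 : AEMeasurable p1 ν) (hZ : AEMeasurable Z (volume.restrict S))
    (hdom : Integrable (fun x : ℝ × Θ =>
      p1 x.2 ^ x.1 * p0 x.2 ^ (1 - x.1) / Z x.1 * |log (p1 x.2 / p0 x.2)|)
      ((volume.restrict S).prod ν)) :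
    Integrable (fun x : ℝ × Θ =>
      p1 x.2 ^ x.1 * p0 x.2 ^ (1 - x.1) / Z x.1 * log (p1 x.2 / p0 x.2))
      ((volume.restrict S).prod ν) := by
  have hs : AEMeasurable (fun x : ℝ × Θ => x.1) ((volume.restrict S).prod ν) :=
    measurable_fst.aemeasurable
  refine hdom.mono (AEMeasurable.aestronglyMeasurable ?_) (Eventually.of_forall fun x => ?_)
  · exact (((hp1.comp_snd.pow hs).mul (hp0.comp_snd.pow (hs.const_sub 1))).div
      hZ.comp_fst).mul (hp1.comp_snd.div hp0.comp_snd).log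
  · simp only [norm_mul, norm_abs_eq_norm, le_refl]

theorem ae_integrable_geomPath_mul_abs_log [SFinite ν] {S : Set ℝ} {Z : ℝ → ℝ}
    (hS : MeasurableSet S) (hZ : ∀ s ∈ S, Z s ≠ 0)
    (hdom : Integrable (fun x : ℝ × Θ =>
      p1 x.2 ^ x.1 * p0 x.2 ^ (1 - x.1) / Z x.1 * |log (p1 x.2 / p0 x.2)|)
      ((volume.restrict S).prod ν)) :
    ∀ᵐ s ∂volume.restrict S,
      Integrable (fun θ => p1 θ ^ s * p0 θ ^ (1 - s) * |log (p1 θ / p0 θ)|) ν := by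
  filter_upwards [hdom.prod_right_ae, ae_restrict_mem hS] with s hs hsS
  refine (hs.const_mul (Z s)).congr (Eventually.of_forall fun θ => ?_)
  have := hZ s hsS
  field_simp

end GeometricPath

theorem NTI_eq_log_chernoff_coefficient_general
    {Θ : Type*} [MeasurableSpace Θ] (ν : Measure Θ) [SigmaFinite ν]
    (p0 p1 : Θ → ℝ)
    (hp0pos : ∀ᵐ θ ∂ν, 0 < p0 θ) (hp1pos : ∀ᵐ θ ∂ν, 0 < p1 θ)
    (hp0int : ∫ θ, p0 θ ∂ν = 1)
    (μc : ℝ → ℝ) (hμc : ∀ t, μc t = ∫ θ, p1 θ ^ t * p0 θ ^ (1 - t) ∂ν)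
    (hμint : ∀ t ∈ Set.Icc (0:ℝ) 1,
      Integrable (fun θ => p1 θ ^ t * p0 θ ^ (1 - t)) ν)
    (hμpos : ∀ t ∈ Set.Icc (0:ℝ) 1, 0 < μc t)
    (hdom : Integrable
      (fun x : ℝ × Θ =>
        (p1 x.2 ^ x.1 * p0 x.2 ^ (1 - x.1) / μc x.1) * |Real.log (p1 x.2 / p0 x.2)|)
      ((volume.restrict (Set.Icc (0:ℝ) 1)).prod ν))
    (t : ℝ) (ht : t ∈ Set.Ioo (0:ℝ) 1)
    (C : ℝ) (hC : C = -Real.log (μc t)) :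
    (∫ s in (0:ℝ)..t, ∫ θ,
        (p1 θ ^ s * p0 θ ^ (1 - s) / μc s) * Real.log (p1 θ / p0 θ) ∂ν)
      = Real.log (μc t) ∧
    (∫ s in (0:ℝ)..t, ∫ θ,
        (p1 θ ^ s * p0 θ ^ (1 - s) / μc s) * Real.log (p1 θ / p0 θ) ∂ν)
      = -C := by
  have hpos := hp0pos.and hp1pos
  have hp0 : AEMeasurable p0 ν := by simpa using (hμint 0 (by norm_num)).aemeasurable
  have hp1 : AEMeasurable p1 ν := by simpa using (hμint 1 (by norm_num)).aemeasurable
  have hμ : μc = fun s => ∫ θ, p1 θ ^ s * p0 θ ^ (1 - s) ∂ν := funext hμc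
  have hμcont : ContinuousOn μc (Icc 0 1) := hμ ▸ continuousOn_integral_geomPath hpos hμint
  have hslice : ∀ᵐ s : ℝ ∂volume.restrict (Ioo 0 1),
      Integrable (fun θ => p1 θ ^ s * p0 θ ^ (1 - s) * |log (p1 θ / p0 θ)|) ν :=
    ae_restrict_of_ae_restrict_of_subset Ioo_subset_Icc_self <|
      ae_integrable_geomPath_mul_abs_log measurableSet_Icc (fun s hs => (hμpos s hs).ne') hdom
  have hderiv : ∀ s ∈ Ioo 0 t, HasDerivAt (fun u => log (μc u))
      (∫ θ, p1 θ ^ s * p0 θ ^ (1 - s) / μc s * log (p1 θ / p0 θ) ∂ν) s := fun s hs =>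
    hasDerivAt_log_integral_geomPath hμ ⟨hs.1, hs.2.trans ht.2⟩
      (hμpos s ⟨hs.1.le, hs.2.le.trans ht.2.le⟩).ne' hpos
      (hp1.div hp0).log.aestronglyMeasurable (fun u hu => hμint u (Ioo_subset_Icc_self hu)) hslice
  have hNTI_int : IntervalIntegrable (fun s => ∫ θ,
      p1 θ ^ s * p0 θ ^ (1 - s) / μc s * log (p1 θ / p0 θ) ∂ν) volume 0 t := by
    rw [intervalIntegrable_iff_integrableOn_Ioc_of_le ht.1.le]
    have hμm : AEMeasurable μc (volume.restrict (Icc 0 1)) :=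
      (hμcont.aestronglyMeasurable measurableSet_Icc).aemeasurable
    exact IntegrableOn.mono_set
      (integrable_geomPath_div_mul_log hp0 hp1 hμm hdom).integral_prod_left
      (Ioc_subset_Icc_self.trans (Icc_subset_Icc_right ht.2.le))
  have hμ0 : μc 0 = 1 := by simpa [hμc] using hp0int
  have hNTI : (∫ s in (0:ℝ)..t, ∫ θ,
      p1 θ ^ s * p0 θ ^ (1 - s) / μc s * log (p1 θ / p0 θ) ∂ν) = log (μc t) := by
    have hlogμ : ContinuousOn (fun s => log (μc s)) (Icc 0 t) :=
      (hμcont.mono (Icc_subset_Icc_right ht.2.le)).log fun s hs =>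
        (hμpos s ⟨hs.1, hs.2.trans ht.2.le⟩).ne'
    rw [intervalIntegral.integral_eq_sub_of_hasDeriv_right_of_le ht.1.le hlogμ
      (fun s hs => (hderiv s hs).hasDerivWithinAt) hNTI_int, hμ0, log_one, sub_zero]
  exact ⟨hNTI, by rw [hNTI, hC, neg_neg]⟩

/-- (Lemma 1) The normalized thermodynamic integral up to any point `t ∈ (0,1)` equals
`log μ(t)`, i.e. minus the Chernoff `t`-divergence of the endpoint densities. -/
theorem NTI_eq_log_chernoff_coefficient
    {Θ : Type*} [MeasurableSpace Θ] (ν : Measure Θ) [SigmaFinite ν]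
    (p0 p1 : Θ → ℝ)
    (hp0pos : ∀ᵐ θ ∂ν, 0 < p0 θ) (hp1pos : ∀ᵐ θ ∂ν, 0 < p1 θ)
    (hp0int : ∫ θ, p0 θ ∂ν = 1) (hp1int : ∫ θ, p1 θ ∂ν = 1)
    (μc : ℝ → ℝ) (hμc : ∀ t, μc t = ∫ θ, p1 θ ^ t * p0 θ ^ (1 - t) ∂ν)
    (hμint : ∀ t ∈ Set.Icc (0:ℝ) 1,
      Integrable (fun θ => p1 θ ^ t * p0 θ ^ (1 - t)) ν)
    (hμpos : ∀ t ∈ Set.Icc (0:ℝ) 1, 0 < μc t)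
    (hdom : Integrable
      (fun x : ℝ × Θ =>
        (p1 x.2 ^ x.1 * p0 x.2 ^ (1 - x.1) / μc x.1) * |Real.log (p1 x.2 / p0 x.2)|)
      ((volume.restrict (Set.Icc (0:ℝ) 1)).prod ν))
    (t : ℝ) (ht : t ∈ Set.Ioo (0:ℝ) 1)
    (C : ℝ) (hC : C = -Real.log (μc t)) :
    (∫ s in (0:ℝ)..t, ∫ θ,
        (p1 θ ^ s * p0 θ ^ (1 - s) / μc s) * Real.log (p1 θ / p0 θ) ∂ν)
      = Real.log (μc t) ∧
    (∫ s in (0:ℝ)..t, ∫ θ,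
        (p1 θ ^ s * p0 θ ^ (1 - s) / μc s) * Real.log (p1 θ / p0 θ) ∂ν)
      = -C :=
  NTI_eq_log_chernoff_coefficient_general ν p0 p1 hp0pos hp1pos hp0int μc hμc hμint hμpos hdom t ht
    C hC
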